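/- The function u(x,t) = a₀ − 2 a₀ tanh(x − c t)² satisfies the Gardner-Kawahara equation u_t + a u_x + λ u u_x − α u² u_x + μ u_xxx + β u_xxxxx = 0, where α = 15(a − c)/(7 a₀²), β = (a − c)/42, λ = 4(a − c)/(7 a₀), and μ = (a − c)/3. -/

import Mathlib

/-! The wave is `φ (x - c t)` with `φ = P ∘ tanh` and `P = a₀ - 2a₀X²`. Since `tanh' = 1 - tanh²`,
every `x`-derivative of `φ` is again a polynomial in `tanh`, obtained by iterating
`P ↦ P' · (1 - X²)`, while `u_t = -c u_x`. The equation thus becomes a polynomial identity in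
`tanh (x - c t)`, which holds by expanding. -/

open Polynomial Real

theorem Real.hasDerivAt_tanh (x : ℝ) : HasDerivAt tanh (1 - tanh x ^ 2) x := by
  rw [show tanh = sinh / cosh from funext tanh_eq_sinh_div_cosh]
  refine ((hasDerivAt_sinh x).div (hasDerivAt_cosh x) (cosh_pos x).ne').congr_deriv ?_
  rw [Pi.div_apply]
  field_simp

noncomputable def tanhDeriv (P : ℝ[X]) : ℝ[X] := derivative P * (1 - X ^ 2)

theorem hasDerivAt_eval_tanh (P : ℝ[X]) (x : ℝ) :
    HasDerivAt (fun x => P.eval (tanh x)) ((tanhDeriv P).eval (tanh x)) x := by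
  simpa [tanhDeriv, Function.comp_def] using (P.hasDerivAt (tanh x)).comp x (hasDerivAt_tanh x)

theorem iteratedDeriv_eval_tanh (n : ℕ) (P : ℝ[X]) :
    iteratedDeriv n (fun x => P.eval (tanh x)) = fun x => (tanhDeriv^[n] P).eval (tanh x) := by
  induction n generalizing P with
  | zero => rfl
  | succ n ih =>
    rw [iteratedDeriv_succ', funext fun x => (hasDerivAt_eval_tanh P x).deriv, ih,
      Function.iterate_succ_apply]

theorem HasDerivAt.comp_const_sub_mul {φ : ℝ → ℝ} {φ' c x t : ℝ}
    (hφ : HasDerivAt φ φ' (x - c * t)) :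
    HasDerivAt (fun t => φ (x - c * t)) (-c * φ') t := by
  simpa [mul_comm, Function.comp_def] using
    hφ.comp t (((hasDerivAt_id t).const_mul c).const_sub x)

theorem gardner_kawahara_tanh_solution_set2_general
    (a c a0 : ℝ)
    (alpha beta lam mu : ℝ)
    (halpha : alpha = 15 * (a - c) / (7 * a0 ^ 2))
    (hbeta : beta = (a - c) / 42)
    (hlam : lam = 4 * (a - c) / (7 * a0))
    (hmu : mu = (a - c) / 3)
    (u : ℝ → ℝ → ℝ)
    (hu : ∀ x t, u x t = a0 - 2 * a0 * (Real.tanh (x - c * t)) ^ 2) :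
    ∀ x t : ℝ,
      deriv (fun t' => u x t') t + a * deriv (fun x' => u x' t) x
        + lam * u x t * deriv (fun x' => u x' t) x
        - alpha * (u x t) ^ 2 * deriv (fun x' => u x' t) x
        + mu * iteratedDeriv 3 (fun x' => u x' t) x
        + beta * iteratedDeriv 5 (fun x' => u x' t) x = 0 := by
  intro x t
  set P : ℝ[X] := C a0 - C (2 * a0) * X ^ 2
  have hprofile : ∀ x t, u x t = P.eval (tanh (x - c * t)) := by simp [hu, P]
  have hspace (n : ℕ) :
      iteratedDeriv n (fun x => u x t) x = (tanhDeriv^[n] P).eval (tanh (x - c * t)) := by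
    simp only [hprofile]
    rw [iteratedDeriv_comp_sub_const n (fun ξ => P.eval (tanh ξ)), iteratedDeriv_eval_tanh]
  have htime : deriv (fun t => u x t) t = -c * (tanhDeriv P).eval (tanh (x - c * t)) := by
    simp only [hprofile]
    exact (hasDerivAt_eval_tanh P _).comp_const_sub_mul.deriv
  rw [htime, ← iteratedDeriv_one, hspace, hspace, hspace, hprofile, halpha, hbeta, hlam, hmu]
  generalize tanh (x - c * t) = T
  simp only [P, tanhDeriv, Function.iterate_succ_apply', Function.iterate_zero_apply,
    map_mul, map_add, map_one, derivative_sub, derivative_neg, derivative_mul, derivative_C,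
    derivative_one, derivative_X, derivative_X_pow_succ, Nat.cast_one, pow_one, zero_mul, mul_zero,
    add_zero, zero_add, zero_sub, sub_neg_eq_add, neg_mul, mul_neg, neg_neg, neg_add_rev, mul_one,
    eval_add, eval_sub, eval_neg, eval_mul, eval_pow, eval_C, eval_one, eval_X]
  field_simp
  ring

/-- The tanh-squared solution (Set 2) of the Gardner-Kawahara equation. -/
theorem gardner_kawahara_tanh_solution_set2
    (a c a0 : ℝ) (ha0 : a0 ≠ 0)
    (alpha beta lam mu : ℝ)
    (halpha : alpha = 15 * (a - c) / (7 * a0 ^ 2))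
    (hbeta : beta = (a - c) / 42)
    (hlam : lam = 4 * (a - c) / (7 * a0))
    (hmu : mu = (a - c) / 3)
    (u : ℝ → ℝ → ℝ)
    (hu : ∀ x t, u x t = a0 - 2 * a0 * (Real.tanh (x - c * t)) ^ 2) :
    ∀ x t : ℝ,
      deriv (fun t' => u x t') t + a * deriv (fun x' => u x' t) x
        + lam * u x t * deriv (fun x' => u x' t) x
        - alpha * (u x t) ^ 2 * deriv (fun x' => u x' t) x
        + mu * iteratedDeriv 3 (fun x' => u x' t) x
        + beta * iteratedDeriv 5 (fun x' => u x' t) x = 0 :=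
  gardner_kawahara_tanh_solution_set2_general a c a0 alpha beta lam mu halpha hbeta hlam hmu u hu
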